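/- Let V be a closed subspace of a Hilbert space H, and let a(·,·) be a bounded sesquilinear form on H with continuity constant c₅ satisfying the Gårding inequality Re a(v,v) ≥ c₂‖v‖²_H − c₆‖v‖²_W for a weaker norm ‖·‖_W with ‖v‖_W ≤ ‖v‖_H. Suppose u ∈ H and u_h ∈ V satisfy the Galerkin orthogonality a(u − u_h, v_h) = 0 for all v_h ∈ V, and suppose the adjoint approximability quantity η := sup_{0≠g∈W*-representers} min_{v_h∈V} ‖S*g − v_h‖_H/‖g‖_W satisfies c₆·c₅·η ≤ c₂/2, where S* is the solution operator of the adjoint variational problem a(v, S*g) = (v,g)_W. Then quasi-optimality holds: ‖u − u_h‖_H ≤ (2c₅/c₂)·min_{v_h∈V}‖u − v_h‖_H. -/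

import Mathlib

/-!
Write `e = u - u_h`. Galerkin orthogonality lets one subtract any element of `V` from the test
function. Testing against the dual solution `z = S* e` minus an element of `V` within
`η ‖e‖_W` of it gives
`‖e‖_W² = Re a(e, z - v_h) ≤ c₅ η ‖e‖ ‖e‖_W`, the Aubin–Nitsche bound. In the Gårding inequality
for `e` the lower-order term is then `c₆ ‖e‖_W² ≤ c₆ c₅ η ‖e‖² ≤ (c₂/2) ‖e‖²`, so it absorbs into
the left side, while `Re a(e, e) = Re a(e, u - v_h) ≤ c₅ ‖e‖ ‖u - v_h‖`.
-/

theorem le_of_sq_le_mul {α : Type*} [Field α] [LinearOrder α] [IsStrictOrderedRing α] {x C : α}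
    (hC : 0 ≤ C) (h : x ^ 2 ≤ C * x) : x ≤ C := by
  nlinarith

section Galerkin

variable {H : Type*} [SeminormedAddCommGroup H] {a : H → H → ℂ} {c₅ η : ℝ} {e : H}

theorem apply_sub_right_of_orthogonal (ha_add_right : ∀ x y z, a x (y + z) = a x y + a x z)
    {V : Set H} (hGal : ∀ w ∈ V, a e w = 0) (x : H) {w : H} (hw : w ∈ V) :
    a e (x - w) = a e x := by
  simpa [hGal w hw] using map_sub (AddMonoidHom.mk' (a e) (ha_add_right e)) x w

theorem aubin_nitsche (ha_add_right : ∀ x y z, a x (y + z) = a x y + a x z)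
    (hc₅ : 0 ≤ c₅) (hη : 0 ≤ η) (hcont : ∀ x y, ‖a x y‖ ≤ c₅ * ‖x‖ * ‖y‖)
    {V : Set H} (hGal : ∀ w ∈ V, a e w = 0) {z : H} {nWe : ℝ} (hz : (a e z).re = nWe ^ 2)
    (happrox : ∃ vh ∈ V, ‖z - vh‖ ≤ η * nWe) :
    nWe ≤ c₅ * η * ‖e‖ := by
  obtain ⟨vh, hvh, hdist⟩ := happrox
  refine le_of_sq_le_mul (by positivity) ?_
  calc nWe ^ 2 = (a e (z - vh)).re := by rw [apply_sub_right_of_orthogonal ha_add_right hGal z hvh, hz]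
    _ ≤ c₅ * ‖e‖ * ‖z - vh‖ := (Complex.re_le_norm _).trans (hcont e _)
    _ ≤ c₅ * ‖e‖ * (η * nWe) := by gcongr
    _ = c₅ * η * ‖e‖ * nWe := by ring

theorem norm_le_of_garding {c₂ c₆ : ℝ} (hc₂ : 0 < c₂) (hc₅ : 0 ≤ c₅) (hc₆ : 0 ≤ c₆)
    (hcont : ∀ x y, ‖a x y‖ ≤ c₅ * ‖x‖ * ‖y‖) {nWe : ℝ}
    (hGarding : c₂ * ‖e‖ ^ 2 - c₆ * nWe ^ 2 ≤ (a e e).re)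
    (hnWe : 0 ≤ nWe) (hnWe_le : nWe ≤ ‖e‖) (hAN : nWe ≤ c₅ * η * ‖e‖)
    (hsmall : c₆ * c₅ * η ≤ c₂ / 2) {y : H} (hy : a e e = a e y) :
    ‖e‖ ≤ 2 * c₅ / c₂ * ‖y‖ := by
  have hre : (a e e).re ≤ c₅ * ‖e‖ * ‖y‖ := hy ▸ (Complex.re_le_norm _).trans (hcont e y)
  have hlower : c₆ * nWe ^ 2 ≤ c₂ / 2 * ‖e‖ ^ 2 :=
    calc c₆ * nWe ^ 2 ≤ c₆ * (c₅ * η * ‖e‖ * ‖e‖) := by gcongr; nlinarith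
      _ = c₆ * c₅ * η * ‖e‖ ^ 2 := by ring
      _ ≤ c₂ / 2 * ‖e‖ ^ 2 := by gcongr
  refine le_of_sq_le_mul (by positivity) ?_
  have : c₂ * ‖e‖ ^ 2 ≤ 2 * c₅ * ‖e‖ * ‖y‖ := by linarith
  rw [div_mul_eq_mul_div, div_mul_eq_mul_div, le_div_iff₀ hc₂]
  linarith

end Galerkin

theorem stmt15_general
    {H : Type*} [NormedAddCommGroup H] [InnerProductSpace ℂ H]
    (V : Submodule ℂ H)
    (a : H → H → ℂ)
    (ha_add_right : ∀ x y z, a x (y + z) = a x y + a x z)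
    (c₂ c₅ c₆ η : ℝ) (hc₂ : 0 < c₂) (hc₅ : 0 < c₅) (hc₆ : 0 < c₆) (hη : 0 ≤ η)
    (hcont : ∀ x y, ‖a x y‖ ≤ c₅ * ‖x‖ * ‖y‖)
    (Wip : H → H → ℂ) (nW : H → ℝ)
    (hnW_nonneg : ∀ v, 0 ≤ nW v)
    (hnW_sq : ∀ v, (Wip v v).re = nW v ^ 2)
    (hnW_le : ∀ v, nW v ≤ ‖v‖)
    (hGarding : ∀ v, c₂ * ‖v‖ ^ 2 - c₆ * nW v ^ 2 ≤ (a v v).re)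
    (Sstar : H → H)
    (hSstar : ∀ g v, a v (Sstar g) = Wip v g)
    (hη_approx : ∀ g : H, ∃ vh ∈ V, ‖Sstar g - vh‖ ≤ η * nW g)
    (hsmall : c₆ * c₅ * η ≤ c₂ / 2)
    (u uh : H) (huh : uh ∈ V)
    (hGal : ∀ vh ∈ V, a (u - uh) vh = 0) :
    (∀ vh ∈ V, ‖u - uh‖ ≤ (2 * c₅ / c₂) * ‖u - vh‖) ∧
    nW (u - uh) ≤ c₅ * η * ‖u - uh‖ := by
  have hAN : nW (u - uh) ≤ c₅ * η * ‖u - uh‖ :=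
    aubin_nitsche ha_add_right hc₅.le hη hcont hGal (by rw [hSstar, hnW_sq]) (hη_approx _)
  refine ⟨fun vh hvh => ?_, hAN⟩
  have hy : a (u - uh) (u - uh) = a (u - uh) (u - vh) := by
    rw [← apply_sub_right_of_orthogonal ha_add_right hGal (u - vh) (V.sub_mem huh hvh),
      sub_sub_sub_cancel_right]
  exact norm_le_of_garding hc₂ hc₅.le hc₆.le hcont (hGarding _) (hnW_nonneg _) (hnW_le _) hAN
    hsmall hy

/-- Abstract Schatz duality argument: for a bounded sesquilinear form `a` on a
Hilbert space `H` satisfying a Gårding inequality with respect to a weaker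
(semi)norm `nW`, Galerkin orthogonality on a closed subspace `V`, and the adjoint
approximability smallness condition `c₆ c₅ η ≤ c₂/2`, one has quasi-optimality
`‖u − u_h‖ ≤ (2c₅/c₂) min_{v_h∈V} ‖u − v_h‖` together with the Aubin–Nitsche
estimate `‖u − u_h‖_W ≤ c₅ η ‖u − u_h‖`. -/
theorem stmt15
    {H : Type*} [NormedAddCommGroup H] [InnerProductSpace ℂ H] [CompleteSpace H]
    (V : Submodule ℂ H) (hV : IsClosed (V : Set H))
    (a : H → H → ℂ)
    (ha_add_left : ∀ x y z, a (x + y) z = a x z + a y z)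
    (ha_add_right : ∀ x y z, a x (y + z) = a x y + a x z)
    (ha_smul_left : ∀ (c : ℂ) x y, a (c • x) y = c * a x y)
    (ha_smul_right : ∀ (c : ℂ) x y, a x (c • y) = (starRingEnd ℂ) c * a x y)
    (c₂ c₅ c₆ η : ℝ) (hc₂ : 0 < c₂) (hc₅ : 0 < c₅) (hc₆ : 0 < c₆) (hη : 0 ≤ η)
    (hcont : ∀ x y, ‖a x y‖ ≤ c₅ * ‖x‖ * ‖y‖)
    (Wip : H → H → ℂ) (nW : H → ℝ)
    (hnW_nonneg : ∀ v, 0 ≤ nW v)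
    (hnW_sq : ∀ v, (Wip v v).re = nW v ^ 2)
    (hnW_le : ∀ v, nW v ≤ ‖v‖)
    (hW_cs : ∀ v g, ‖Wip v g‖ ≤ nW v * nW g)
    (hGarding : ∀ v, c₂ * ‖v‖ ^ 2 - c₆ * nW v ^ 2 ≤ (a v v).re)
    (Sstar : H → H)
    (hSstar : ∀ g v, a v (Sstar g) = Wip v g)
    (hη_approx : ∀ g : H, ∃ vh ∈ V, ‖Sstar g - vh‖ ≤ η * nW g)
    (hsmall : c₆ * c₅ * η ≤ c₂ / 2)
    (u uh : H) (huh : uh ∈ V)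
    (hGal : ∀ vh ∈ V, a (u - uh) vh = 0) :
    (∀ vh ∈ V, ‖u - uh‖ ≤ (2 * c₅ / c₂) * ‖u - vh‖) ∧
    nW (u - uh) ≤ c₅ * η * ‖u - uh‖ :=
  stmt15_general V a ha_add_right c₂ c₅ c₆ η hc₂ hc₅ hc₆ hη hcont Wip nW hnW_nonneg hnW_sq hnW_le
    hGarding Sstar hSstar hη_approx hsmall u uh huh hGal
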